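/- Fix an integer m ≥ 1 and let R = F₂[U, U⁻¹]. With M(m) and ∂ as follows: M(m) is the free R-module with basis x₁,…,x_{2m}, y₁,…,y_{4m−1}, z₁,…,z_{2m}, and u_{p,1}, u_{p,2}, v_{p,1},…,v_{p,4}, w_{p,1}, w_{p,2} for 1 ≤ p ≤ m; ∂x₁ = 0, ∂x_k = y_{k−1} for 2 ≤ k ≤ 2m; ∂y_l = 0 for 1 ≤ l ≤ 2m−1, ∂y_{2m+l−1} = z_l + U·x_l for 1 ≤ l ≤ 2m; ∂z₁ = 0, ∂z_k = U·y_{k−1} for 2 ≤ k ≤ 2m; ∂u_{p,i} = v_{p,i}, ∂v_{p,i} = 0, ∂v_{p,i+2} = w_{p,i} + U·u_{p,i}, ∂w_{p,i} = U·v_{p,i} for i = 1, 2. Then the homology ker ∂ / im ∂ of (M(m), ∂) is a free R-module of rank one, generated by the class of x₁. -/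

import Mathlib

/-!
STATEMENT 13.
Fix m ≥ 1, R = F₂[U, U⁻¹], and let (M(m), ∂) be as in the paper's proof of
Theorem 1.3 (see the hypotheses below; basis conventions as in `Idx`).
Then the homology ker ∂ / im ∂ of (M(m), ∂) is a free R-module of rank one,
generated by the class of x₁.  This is expressed as: im ∂ ⊆ ker ∂, x₁ ∈ ker ∂,
ker ∂ = im ∂ ⊔ R·x₁ (the class of x₁ generates the homology), and
r·x₁ ∈ im ∂ implies r = 0 (the class of x₁ is R-free).
-/

/-- Basis index type of the module M(m) (0-based indices: `Idx.x k` is x_{k+1}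
for `k : Fin (2m)`, `Idx.y l` is y_{l+1} for `l : Fin (4m−1)`, `Idx.z k` is
z_{k+1}, `Idx.u p i` is u_{p+1,i+1}, `Idx.v p i` is v_{p+1,i+1}, `Idx.w p i`
is w_{p+1,i+1}). -/
inductive Idx (m : ℕ) where
  | x : Fin (2 * m) → Idx m
  | y : Fin (4 * m - 1) → Idx m
  | z : Fin (2 * m) → Idx m
  | u : Fin m → Fin 2 → Idx m
  | v : Fin m → Fin 4 → Idx m
  | w : Fin m → Fin 2 → Idx m
  deriving DecidableEq

/-- The ground ring R = F₂[U, U⁻¹]. -/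
abbrev R2 : Type := LaurentPolynomial (ZMod 2)

/-- The element U ∈ R. -/
noncomputable def U : R2 := LaurentPolynomial.T 1

/-- The basis vector of the free module `Idx m →₀ R2` at index `i`. -/
noncomputable def e {m : ℕ} (i : Idx m) : Idx m →₀ R2 := Finsupp.single i 1

/-!
The map `H` sending `y_k ↦ x_{k+1}`, `z_k ↦ y_{2m-1+k}`, `v_{p,i} ↦ u_{p,i}` and
`w_{p,i} ↦ v_{p,i+2}` (and everything else to `0`) inverts the arrows of `∂` that cancel in
pairs. Over `F₂` it is a chain homotopy `∂H + H∂ = id - π`, where `π f = ℓ(f) x₁` and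
`ℓ = x₁* + U z₁*`: the only defects are at `x₁`, which `∂H + H∂` kills, and at `z₁`, which it
sends to `z₁ + U x₁`. So every cycle is homologous to a multiple of `x₁`, and since `ℓ ∘ ∂ = 0`
and `ℓ(x₁) = 1`, `r x₁` is a boundary only for `r = 0`.
-/

section HomotopyToPoint

variable {R M : Type*} [Semiring R] [AddCommGroup M] [Module R M]
  {d h : M →ₗ[R] M} {ℓ : M →ₗ[R] R} {x : M}

theorem ker_eq_range_sup_span_of_homotopy (hdd : d ∘ₗ d = 0) (hdx : d x = 0)
    (hom : ∀ f, d (h f) + h (d f) + ℓ f • x = f) :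
    LinearMap.ker d = LinearMap.range d ⊔ Submodule.span R {x} := by
  refine le_antisymm (fun f hf => ?_) (sup_le (LinearMap.range_le_ker_iff.mpr hdd) ?_)
  · have hf' : d (h f) + ℓ f • x = f := by
      simpa [LinearMap.mem_ker.mp hf] using hom f
    rw [← hf']
    exact Submodule.add_mem_sup (LinearMap.mem_range_self d _)
      (Submodule.smul_mem _ _ (Submodule.mem_span_singleton_self x))
  · rwa [Submodule.span_singleton_le_iff_mem]

theorem apply_apply_eq_zero_of_homotopy (hdd : d ∘ₗ d = 0) (hdx : d x = 0) (hℓx : ℓ x = 1)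
    (hom : ∀ f, d (h f) + h (d f) + ℓ f • x = f) (g : M) : ℓ (d g) = 0 := by
  have hdd' : ∀ f, d (d f) = 0 := LinearMap.congr_fun hdd
  have hdhd : d (h (d g)) = d g := by
    simpa [hdd', hdx] using congrArg d (hom g)
  have hℓd : ℓ (d g) • x = 0 := by
    simpa [hdhd, hdd'] using hom (d g)
  simpa [hℓx] using congrArg ℓ hℓd

theorem eq_zero_of_smul_mem_range_of_homotopy (hdd : d ∘ₗ d = 0) (hdx : d x = 0)
    (hℓx : ℓ x = 1) (hom : ∀ f, d (h f) + h (d f) + ℓ f • x = f) {r : R}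
    (hr : r • x ∈ LinearMap.range d) : r = 0 := by
  obtain ⟨g, hg⟩ := hr
  simpa [hg, hℓx] using apply_apply_eq_zero_of_homotopy hdd hdx hℓx hom g

end HomotopyToPoint

theorem add_self_eq_zero_of_charTwo (R : Type*) {M : Type*} [Semiring R] [CharP R 2]
    [AddCommMonoid M] [Module R M] (v : M) : v + v = 0 := by
  rw [← two_smul R v, CharTwo.two_eq_zero (R := R), zero_smul]

instance : CharP R2 2 := charP_of_injective_algebraMap' (ZMod 2) 2

namespace WhiteheadDouble

variable {m : ℕ}

/-- The differential of the paper's Figure 5, restated with the indices as natural numbers. -/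
structure IsModelDifferential (bd : (Idx m →₀ R2) →ₗ[R2] (Idx m →₀ R2)) : Prop where
  x_zero (h : 0 < 2 * m) : bd (e (.x ⟨0, h⟩)) = 0
  x_succ (k : ℕ) (h : k + 1 < 2 * m) : bd (e (.x ⟨k + 1, h⟩)) = e (.y ⟨k, by omega⟩)
  y_low (l : ℕ) (h : l + 1 < 2 * m) : bd (e (.y ⟨l, by omega⟩)) = 0
  y_high (k : ℕ) (h : k < 2 * m) :
    bd (e (.y ⟨2 * m - 1 + k, by omega⟩)) = e (.z ⟨k, h⟩) + U • e (.x ⟨k, h⟩)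
  z_zero (h : 0 < 2 * m) : bd (e (.z ⟨0, h⟩)) = 0
  z_succ (k : ℕ) (h : k + 1 < 2 * m) : bd (e (.z ⟨k + 1, h⟩)) = U • e (.y ⟨k, by omega⟩)
  u (p : Fin m) (i : ℕ) (h : i < 2) : bd (e (.u p ⟨i, h⟩)) = e (.v p ⟨i, by omega⟩)
  v_low (p : Fin m) (i : ℕ) (h : i < 2) : bd (e (.v p ⟨i, by omega⟩)) = 0
  v_high (p : Fin m) (i : ℕ) (h : i < 2) :
    bd (e (.v p ⟨i + 2, by omega⟩)) = e (.w p ⟨i, h⟩) + U • e (.u p ⟨i, h⟩)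
  w (p : Fin m) (i : ℕ) (h : i < 2) : bd (e (.w p ⟨i, h⟩)) = U • e (.v p ⟨i, by omega⟩)

noncomputable def homotopyBasis : Idx m → (Idx m →₀ R2)
  | .x _ => 0
  | .y l => if h : l.val + 1 < 2 * m then e (.x ⟨l.val + 1, h⟩) else 0
  | .z k => e (.y ⟨2 * m - 1 + k.val, by omega⟩)
  | .u _ _ => 0
  | .v p i => if h : i.val < 2 then e (.u p ⟨i.val, h⟩) else 0
  | .w p i => e (.v p ⟨i.val + 2, by omega⟩)

noncomputable def homotopy (m : ℕ) : (Idx m →₀ R2) →ₗ[R2] (Idx m →₀ R2) :=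
  Finsupp.linearCombination R2 homotopyBasis

noncomputable def coordBasis : Idx m → R2
  | .x k => if k.val = 0 then 1 else 0
  | .z k => if k.val = 0 then U else 0
  | _ => 0

noncomputable def coord (m : ℕ) : (Idx m →₀ R2) →ₗ[R2] R2 :=
  Finsupp.linearCombination R2 coordBasis

@[simp]
theorem homotopy_e (i : Idx m) : homotopy m (e i) = homotopyBasis i := by
  simp [homotopy, e]

@[simp]
theorem coord_e (i : Idx m) : coord m (e i) = coordBasis i := by
  simp [coord, e]

namespace IsModelDifferential

variable {bd : (Idx m →₀ R2) →ₗ[R2] (Idx m →₀ R2)}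

theorem bd_bd_e (hbd : IsModelDifferential bd) (i : Idx m) : bd (bd (e i)) = 0 := by
  rcases i with ⟨_ | k, hk⟩ | ⟨l, _⟩ | ⟨_ | k, hk⟩ | ⟨p, i, hi⟩ | ⟨p, i, hi⟩ | ⟨p, i, hi⟩
  · rw [hbd.x_zero, map_zero]
  · rw [hbd.x_succ k hk, hbd.y_low k hk]
  · by_cases hlow : l + 1 < 2 * m
    · rw [hbd.y_low l hlow, map_zero]
    · obtain ⟨k, rfl⟩ : ∃ k, l = 2 * m - 1 + k := ⟨l - (2 * m - 1), by omega⟩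
      rw [hbd.y_high k (by omega), map_add, map_smul]
      rcases k with _ | k
      · rw [hbd.x_zero, hbd.z_zero, smul_zero, add_zero]
      · rw [hbd.x_succ k (by omega), hbd.z_succ k (by omega), add_self_eq_zero_of_charTwo R2]
  · rw [hbd.z_zero, map_zero]
  · rw [hbd.z_succ k hk, map_smul, hbd.y_low k hk, smul_zero]
  · rw [hbd.u p i hi, hbd.v_low p i hi]
  · by_cases hlow : i < 2
    · rw [hbd.v_low p i hlow, map_zero]
    · obtain ⟨i, rfl⟩ : ∃ j, i = j + 2 := ⟨i - 2, by omega⟩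
      rw [hbd.v_high p i (by omega), map_add, map_smul, hbd.w, hbd.u,
        add_self_eq_zero_of_charTwo R2]
  · rw [hbd.w p i hi, map_smul, hbd.v_low p i hi, smul_zero]

theorem homotopy_identity_e (hbd : IsModelDifferential bd) (h0 : 0 < 2 * m) (i : Idx m) :
    bd (homotopy m (e i)) + homotopy m (bd (e i)) + coord m (e i) • e (.x ⟨0, h0⟩) = e i := by
  rcases i with ⟨_ | k, hk⟩ | ⟨l, _⟩ | ⟨_ | k, hk⟩ | ⟨p, i, hi⟩ | ⟨p, i, hi⟩ | ⟨p, i, hi⟩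
  · simp [hbd.x_zero, homotopyBasis, coordBasis]
  · simp [hbd.x_succ k hk, homotopyBasis, coordBasis, hk]
  · by_cases hlow : l + 1 < 2 * m
    · simp [hbd.y_low l hlow, homotopyBasis, coordBasis, hlow, hbd.x_succ l hlow]
    · obtain ⟨k, rfl⟩ : ∃ k, l = 2 * m - 1 + k := ⟨l - (2 * m - 1), by omega⟩
      simp [hbd.y_high k (by omega), homotopyBasis, coordBasis, hlow]
  · have hy : bd (e (.y ⟨2 * m - 1, by omega⟩)) = e (.z ⟨0, hk⟩) + U • e (.x ⟨0, hk⟩) :=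
      hbd.y_high 0 hk
    simp [hbd.z_zero, homotopyBasis, coordBasis, hy, add_assoc, add_self_eq_zero_of_charTwo R2]
  · simp [hbd.z_succ k hk, homotopyBasis, coordBasis, hk, hbd.y_high (k + 1) hk, add_assoc,
      add_self_eq_zero_of_charTwo R2]
  · simp [hbd.u p i hi, homotopyBasis, coordBasis, hi]
  · by_cases hlow : i < 2
    · simp [hbd.v_low p i hlow, homotopyBasis, coordBasis, hlow, hbd.u p i hlow]
    · obtain ⟨i, rfl⟩ : ∃ j, i = j + 2 := ⟨i - 2, by omega⟩
      simp [hbd.v_high p i (by omega), homotopyBasis, coordBasis]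
  · simp [hbd.w p i hi, homotopyBasis, coordBasis, hi, hbd.v_high p i hi, add_assoc,
      add_self_eq_zero_of_charTwo R2]

theorem comp_self (hbd : IsModelDifferential bd) : bd ∘ₗ bd = 0 :=
  Finsupp.basisSingleOne.ext fun i => by simpa [e] using hbd.bd_bd_e i

theorem homotopy_identity (hbd : IsModelDifferential bd) (h0 : 0 < 2 * m)
    (f : Idx m →₀ R2) :
    bd (homotopy m f) + homotopy m (bd f) + coord m f • e (.x ⟨0, h0⟩) = f := by
  have hid : bd ∘ₗ homotopy m + homotopy m ∘ₗ bd + (coord m).smulRight (e (.x ⟨0, h0⟩)) =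
      LinearMap.id :=
    Finsupp.basisSingleOne.ext fun i => by simpa [e] using hbd.homotopy_identity_e h0 i
  simpa using LinearMap.congr_fun hid f

end IsModelDifferential

theorem coord_e_x_zero (h0 : 0 < 2 * m) : coord m (e (.x ⟨0, h0⟩)) = 1 := by
  simp [coordBasis]

end WhiteheadDouble

theorem stmt_13 (m : ℕ) (hm : 1 ≤ m)
    (bd : (Idx m →₀ R2) →ₗ[R2] (Idx m →₀ R2))
    -- ∂x₁ = 0
    (hx1 : ∀ k : Fin (2 * m), k.val = 0 → bd (e (.x k)) = 0)
    -- ∂x_k = y_{k−1} for 2 ≤ k ≤ 2m (0-based: y-index + 1 = x-index)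
    (hx : ∀ (k : Fin (2 * m)) (l : Fin (4 * m - 1)), l.val + 1 = k.val →
      bd (e (.x k)) = e (.y l))
    -- ∂y_l = 0 for 1 ≤ l ≤ 2m−1 (0-based: l.val + 1 ≤ 2m − 1)
    (hy0 : ∀ l : Fin (4 * m - 1), l.val + 2 ≤ 2 * m → bd (e (.y l)) = 0)
    -- ∂y_{2m+l−1} = z_l + U·x_l for 1 ≤ l ≤ 2m
    (hy : ∀ (l : Fin (4 * m - 1)) (k : Fin (2 * m)), l.val + 1 = 2 * m + k.val →
      bd (e (.y l)) = e (.z k) + U • e (.x k))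
    -- ∂z₁ = 0
    (hz1 : ∀ k : Fin (2 * m), k.val = 0 → bd (e (.z k)) = 0)
    -- ∂z_k = U·y_{k−1} for 2 ≤ k ≤ 2m
    (hz : ∀ (k : Fin (2 * m)) (l : Fin (4 * m - 1)), l.val + 1 = k.val →
      bd (e (.z k)) = U • e (.y l))
    -- ∂u_{p,i} = v_{p,i} for i = 1, 2
    (hu : ∀ (p : Fin m) (i : Fin 2) (i' : Fin 4), i'.val = i.val →
      bd (e (.u p i)) = e (.v p i'))
    -- ∂v_{p,i} = 0 for i = 1, 2
    (hv0 : ∀ (p : Fin m) (i : Fin 4), i.val < 2 → bd (e (.v p i)) = 0)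
    -- ∂v_{p,i+2} = w_{p,i} + U·u_{p,i} for i = 1, 2
    (hv : ∀ (p : Fin m) (i : Fin 4) (i' : Fin 2), i.val = i'.val + 2 →
      bd (e (.v p i)) = e (.w p i') + U • e (.u p i'))
    -- ∂w_{p,i} = U·v_{p,i} for i = 1, 2
    (hw : ∀ (p : Fin m) (i : Fin 2) (i' : Fin 4), i'.val = i.val →
      bd (e (.w p i)) = U • e (.v p i'))
    :
    LinearMap.range bd ≤ LinearMap.ker bd ∧
    e (.x ⟨0, by omega⟩) ∈ LinearMap.ker bd ∧
    LinearMap.ker bd =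
      LinearMap.range bd ⊔ Submodule.span R2 {e (.x ⟨0, by omega⟩)} ∧
    (∀ r : R2, r • e (.x ⟨0, by omega⟩) ∈ LinearMap.range bd → r = 0) := by
  have hbd : WhiteheadDouble.IsModelDifferential bd :=
    { x_zero := fun _ => hx1 _ rfl
      x_succ := fun _ _ => hx _ _ rfl
      y_low := fun _ h => hy0 _ h
      y_high := fun _ _ => hy _ _ (by dsimp only; omega)
      z_zero := fun _ => hz1 _ rfl
      z_succ := fun _ _ => hz _ _ rfl
      u := fun _ _ _ => hu _ _ _ rfl
      v_low := fun _ _ h => hv0 _ _ h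
      v_high := fun _ _ _ => hv _ _ _ rfl
      w := fun _ _ _ => hw _ _ _ rfl }
  have h0 : 0 < 2 * m := by omega
  have hdd := hbd.comp_self
  have hdx := hbd.x_zero h0
  have hom := hbd.homotopy_identity h0
  exact ⟨LinearMap.range_le_ker_iff.mpr hdd, hdx, ker_eq_range_sup_span_of_homotopy hdd hdx hom,
    fun _ => eq_zero_of_smul_mem_range_of_homotopy hdd hdx (WhiteheadDouble.coord_e_x_zero h0) hom⟩
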